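/- arXiv:2103.13062 — 2 statements merged into one kernel-verified Lean document; each statement's English description precedes it below -/
import Mathlib

section
/- Let S be a Cu-semigroup. A submonoid T ⊆ S is a sub-Cu-semigroup if and only if T = T', where T' is the set of suprema of ≪-increasing sequences in T. -/
def WayBelow {S : Type*} [PartialOrder S] (x y : S) : Prop :=
  ∀ f : ℕ → S, Monotone f → ∀ z : S, IsLUB (Set.range f) z → y ≤ z → ∃ n, x ≤ f n

class CuSemigroup (S : Type*) [AddCommMonoid S] [PartialOrder S] : Prop where
  zero_le : ∀ x : S, 0 ≤ x
  add_le_add_left : ∀ x y : S, x ≤ y → ∀ z : S, z + x ≤ z + y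
  exists_sup : ∀ f : ℕ → S, Monotone f → ∃ z : S, IsLUB (Set.range f) z
  exists_wb_seq : ∀ x : S, ∃ f : ℕ → S, (∀ n, WayBelow (f n) (f (n + 1))) ∧ IsLUB (Set.range f) x
  wb_add : ∀ x' x y' y : S, WayBelow x' x → WayBelow y' y → WayBelow (x' + y') (x + y)
  sup_add : ∀ f g : ℕ → S, Monotone f → Monotone g → ∀ a b : S,
    IsLUB (Set.range f) a → IsLUB (Set.range g) b →
    IsLUB (Set.range fun n => f n + g n) (a + b)

def cuDerivedSet {S : Type*} [PartialOrder S] (T : Set S) : Set S :=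
  { s | ∃ f : ℕ → S, (∀ n, f n ∈ T) ∧ (∀ n, WayBelow (f n) (f (n + 1))) ∧ IsLUB (Set.range f) s }

def SupClosedSet {S : Type*} [PartialOrder S] (T : Set S) : Prop :=
  ∀ f : ℕ → S, Monotone f → (∀ n, f n ∈ T) → ∀ z : S, IsLUB (Set.range f) z → z ∈ T

def IsSubCu {S : Type*} [AddCommMonoid S] [PartialOrder S] (T : AddSubmonoid S) : Prop :=
  CuSemigroup T ∧
  (∀ f : ℕ → T, Monotone f → ∀ z : T, IsLUB (Set.range f) z →
    IsLUB (Set.range fun n => (f n : S)) (z : S)) ∧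
  (∀ x y : T, WayBelow x y → WayBelow (x : S) (y : S))

section Aux

variable {S : Type*} [PartialOrder S]

theorem wayBelow_le {x y : S} (h : WayBelow x y) : x ≤ y := by
  obtain ⟨n, hn⟩ := h (fun _ => y) monotone_const y
    (by rw [Set.range_const]; exact isLUB_singleton) le_rfl
  exact hn

theorem wayBelow_mono {x x' y y' : S} (hx : x ≤ x') (h : WayBelow x' y') (hy : y' ≤ y) :
    WayBelow x y := fun f hf z hz hle =>
  (h f hf z hz (hy.trans hle)).imp fun _ hn => hx.trans hn

theorem monotone_of_wb {f : ℕ → S} (h : ∀ n, WayBelow (f n) (f (n + 1))) : Monotone f :=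
  monotone_nat_of_le_succ fun n => wayBelow_le (h n)

variable [AddCommMonoid S] [CuSemigroup S]

/-- The derived set is closed under suprema of monotone sequences (diagonal argument). -/
theorem derived_supClosed (T : Set S) : SupClosedSet (cuDerivedSet T) := by
  intro f hf hfT z hz
  choose g hgT hgwb hglub using hfT
  have hgmono : ∀ n, Monotone (g n) := fun n => monotone_of_wb (hgwb n)
  have hgle : ∀ p q, g p q ≤ f p := fun p q => (hglub p).1 (Set.mem_range_self q)
  have key : ∀ p q n, p ≤ n + 1 → ∃ m, g p q ≤ g (n + 1) m := by
    intro p q n hpn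
    have h1 : WayBelow (g p q) (f (n + 1)) :=
      wayBelow_mono le_rfl (hgwb p q) ((hgle p (q + 1)).trans (hf hpn))
    exact h1 (g (n + 1)) (hgmono (n + 1)) (f (n + 1)) (hglub (n + 1)) le_rfl
  have step : ∀ n j, ∃ m, g n (j + 1) ≤ g (n + 1) m ∧ ∀ p ≤ n, g p n ≤ g (n + 1) m := by
    intro n j
    obtain ⟨m0, hm0⟩ := key n (j + 1) n (by omega)
    have hc : ∀ p, ∃ mp, p ≤ n → g p n ≤ g (n + 1) mp := by
      intro p
      by_cases hp : p ≤ n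
      · obtain ⟨mp, hmp⟩ := key p n n (by omega)
        exact ⟨mp, fun _ => hmp⟩
      · exact ⟨0, fun h => absurd h hp⟩
    choose c hc using hc
    refine ⟨m0 ⊔ (Finset.range (n + 1)).sup c, hm0.trans (hgmono (n + 1) le_sup_left), ?_⟩
    intro p hp
    refine (hc p hp).trans (hgmono (n + 1) ?_)
    exact le_trans (Finset.le_sup (Finset.mem_range.mpr (by omega))) le_sup_right
  choose st hst1 hst2 using step
  set k : ℕ → ℕ := fun n => Nat.rec 0 (fun n kn => st n kn) n with hk
  have hksucc : ∀ n, k (n + 1) = st n (k n) := fun n => rfl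
  set h : ℕ → S := fun n => g n (k n) with hh
  have hwb : ∀ n, WayBelow (h n) (h (n + 1)) := by
    intro n
    have : g n (k n + 1) ≤ g (n + 1) (k (n + 1)) := by rw [hksucc]; exact hst1 n (k n)
    exact wayBelow_mono le_rfl (hgwb n (k n)) this
  refine ⟨h, fun n => hgT n (k n), hwb, ?_, ?_⟩
  · rintro x ⟨n, rfl⟩
    exact (hgle n (k n)).trans (hz.1 (Set.mem_range_self n))
  · intro u hu
    refine hz.2 ?_
    rintro x ⟨p, rfl⟩
    refine (hglub p).2 ?_
    rintro y ⟨q, rfl⟩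
    have hn : g p q ≤ h (max p q + 1) := by
      have h1 : g p q ≤ g p (max p q) := hgmono p (le_max_right p q)
      have h2 : g p (max p q) ≤ g (max p q + 1) (k (max p q + 1)) := by
        rw [hksucc]
        exact hst2 (max p q) (k (max p q)) p (le_max_left p q)
      exact h1.trans h2
    exact hn.trans (hu (Set.mem_range_self (max p q + 1)))

variable {T : AddSubmonoid S}

/-- LUB transfer down: if the supremum in `S` of a sequence in `T` lies in `T`,
it is also the supremum in `T`. -/
theorem isLUB_subtype_of_isLUB {f : ℕ → T} {z : T}
    (h : IsLUB (Set.range fun n => (f n : S)) (z : S)) : IsLUB (Set.range f) z := by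
  constructor
  · rintro x ⟨n, rfl⟩
    exact h.1 (Set.mem_range_self n)
  · intro u hu
    show (z : S) ≤ (u : S)
    refine h.2 ?_
    rintro x ⟨n, rfl⟩
    exact hu (Set.mem_range_self n)

/-- LUB transfer up, given sup-closedness. -/
theorem isLUB_coe_of_isLUB (hsc : SupClosedSet (T : Set S)) {f : ℕ → T} (hf : Monotone f)
    {z : T} (h : IsLUB (Set.range f) z) : IsLUB (Set.range fun n => (f n : S)) (z : S) := by
  have hfm : Monotone fun n => (f n : S) := fun a b hab => hf hab
  obtain ⟨z', hz'⟩ := CuSemigroup.exists_sup (fun n => (f n : S)) hfm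
  have hz'T : z' ∈ T := hsc _ hfm (fun n => (f n).2) z' hz'
  have : z = ⟨z', hz'T⟩ := h.unique (isLUB_subtype_of_isLUB hz')
  rw [this]; exact hz'

/-- Way-below transfer down, given sup-closedness. -/
theorem wayBelow_subtype_of_wayBelow (hsc : SupClosedSet (T : Set S)) {a b : T}
    (h : WayBelow (a : S) (b : S)) : WayBelow a b := by
  intro f hf w hw hbw
  exact h (fun n => (f n : S)) (fun x y hxy => hf hxy) (w : S)
    (isLUB_coe_of_isLUB hsc hf hw) hbw

theorem supClosed_of_derived (hT : (T : Set S) = cuDerivedSet (T : Set S)) :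
    SupClosedSet (T : Set S) := by
  intro f hf hfT z hz
  rw [hT]
  exact derived_supClosed (T : Set S) f hf (fun n => hT ▸ hfT n) z hz

/-- Way-below transfer up, given `T = T'`. -/
theorem wayBelow_coe_of_wayBelow (hT : (T : Set S) = cuDerivedSet (T : Set S)) {x y : T}
    (h : WayBelow x y) : WayBelow (x : S) (y : S) := by
  have hsc := supClosed_of_derived hT
  have hy : (y : S) ∈ cuDerivedSet (T : Set S) := hT ▸ y.2
  obtain ⟨g, hgT, hgwb, hglub⟩ := hy
  set g' : ℕ → T := fun n => ⟨g n, hgT n⟩ with hg'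
  have hg'm : Monotone g' := fun a b hab => monotone_of_wb hgwb hab
  obtain ⟨n, hn⟩ := h g' hg'm y (isLUB_subtype_of_isLUB hglub) le_rfl
  have hxn : (x : S) ≤ g n := hn
  exact wayBelow_mono hxn (hgwb n) ((hglub).1 (Set.mem_range_self (n + 1)))

end Aux

theorem isSubCu_iff_eq_derivedSet {S : Type*} [AddCommMonoid S] [PartialOrder S]
    [CuSemigroup S] (T : AddSubmonoid S) :
    IsSubCu T ↔ (T : Set S) = cuDerivedSet (T : Set S) := by
  constructor
  · rintro ⟨hCu, hsup, hwb⟩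
    apply Set.Subset.antisymm
    · intro x hx
      obtain ⟨f, hfwb, hflub⟩ := hCu.exists_wb_seq ⟨x, hx⟩
      have hfm : Monotone f := monotone_of_wb hfwb
      exact ⟨fun n => (f n : S), fun n => (f n).2, fun n => hwb _ _ (hfwb n),
        hsup f hfm ⟨x, hx⟩ hflub⟩
    · rintro z ⟨f, hfT, hfwb, hflub⟩
      have hfm : Monotone f := monotone_of_wb hfwb
      set f' : ℕ → T := fun n => ⟨f n, hfT n⟩ with hf'
      have hf'm : Monotone f' := fun a b hab => hfm hab
      obtain ⟨w, hw⟩ := hCu.exists_sup f' hf'm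
      have : IsLUB (Set.range fun n => (f' n : S)) (w : S) := hsup f' hf'm w hw
      have hzw : z = (w : S) := hflub.unique this
      rw [hzw]; exact w.2
  · intro hT
    have hsc : SupClosedSet (T : Set S) := supClosed_of_derived hT
    have hmono : ∀ (f : ℕ → T), Monotone f → Monotone fun n => (f n : S) :=
      fun f hf a b hab => hf hab
    refine ⟨⟨?_, ?_, ?_, ?_, ?_, ?_⟩, ?_, fun x y h => wayBelow_coe_of_wayBelow hT h⟩
    · intro x
      show ((0 : T) : S) ≤ (x : S)
      rw [ZeroMemClass.coe_zero]
      exact CuSemigroup.zero_le _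
    · intro x y hxy u
      show ((u + x : T) : S) ≤ ((u + y : T) : S)
      rw [AddSubmonoid.coe_add, AddSubmonoid.coe_add]
      exact CuSemigroup.add_le_add_left (x : S) (y : S) hxy (u : S)
    · intro f hf
      obtain ⟨z, hz⟩ := CuSemigroup.exists_sup (fun n => (f n : S)) (hmono f hf)
      have hzT : z ∈ T := hsc _ (hmono f hf) (fun n => (f n).2) z hz
      exact ⟨⟨z, hzT⟩, isLUB_subtype_of_isLUB hz⟩
    · intro x
      have hx : (x : S) ∈ cuDerivedSet (T : Set S) := hT ▸ x.2
      obtain ⟨g, hgT, hgwb, hglub⟩ := hx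
      refine ⟨fun n => ⟨g n, hgT n⟩, fun n => wayBelow_subtype_of_wayBelow hsc (hgwb n), ?_⟩
      have : IsLUB (Set.range fun n => ((⟨g n, hgT n⟩ : T) : S)) ((x : S)) := hglub
      exact isLUB_subtype_of_isLUB this
    · intro x' x y' y hx hy
      have h := CuSemigroup.wb_add (x' : S) (x : S) (y' : S) (y : S)
        (wayBelow_coe_of_wayBelow hT hx) (wayBelow_coe_of_wayBelow hT hy)
      apply wayBelow_subtype_of_wayBelow hsc
      rw [AddSubmonoid.coe_add, AddSubmonoid.coe_add]
      exact h
    · intro f g hf hg a b ha hb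
      have hS := CuSemigroup.sup_add (fun n => (f n : S)) (fun n => (g n : S))
        (hmono f hf) (hmono g hg) (a : S) (b : S)
        (isLUB_coe_of_isLUB hsc hf ha) (isLUB_coe_of_isLUB hsc hg hb)
      apply isLUB_subtype_of_isLUB
      have hrange : (Set.range fun n => ((f n + g n : T) : S)) =
          Set.range fun n => (f n : S) + (g n : S) := by
        simp [AddSubmonoid.coe_add]
      rw [AddSubmonoid.coe_add, hrange]
      exact hS
    · intro f hf z hz
      exact isLUB_coe_of_isLUB hsc hf hz
end

section
/- Let S = lim_{λ} S_λ be an inductive limit of Cu-semigroups with limit maps φ_λ : S_λ → S. Then the family (S_λ, φ_λ) approximates S. -/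
def IsCuMorphism {T S : Type*} [AddCommMonoid T] [PartialOrder T] [AddCommMonoid S]
    [PartialOrder S] (φ : T → S) : Prop :=
  φ 0 = 0 ∧ (∀ x y : T, φ (x + y) = φ x + φ y) ∧ Monotone φ ∧
  (∀ f : ℕ → T, Monotone f → ∀ z : T, IsLUB (Set.range f) z →
    IsLUB (Set.range fun n => φ (f n)) (φ z)) ∧
  (∀ x y : T, WayBelow x y → WayBelow (φ x) (φ y))

def Approximates {S : Type*} [AddCommMonoid S] [PartialOrder S] {ι : Type*}
    (Sl : ι → Type*) [∀ i, AddCommMonoid (Sl i)] [∀ i, PartialOrder (Sl i)]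
    (φ : ∀ i, Sl i → S) : Prop :=
  ∀ (p q : ℕ) (x' x : Fin p → S) (m n : Fin q → Fin p → ℕ),
    (∀ j, WayBelow (x' j) (x j)) →
    (∀ k, WayBelow (∑ j, m k j • x j) (∑ j, n k j • x' j)) →
    ∃ i, ∃ y : Fin p → Sl i,
      (∀ j, WayBelow (x' j) (φ i (y j)) ∧ WayBelow (φ i (y j)) (x j)) ∧
      ∀ k, WayBelow (∑ j, m k j • y j) (∑ j, n k j • y j)


section Helpers

lemma wb_le_left {S : Type*} [PartialOrder S] {a b c : S} (h : a ≤ b) (hw : WayBelow b c) :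
    WayBelow a c := fun f hf z hz hc => (hw f hf z hz hc).imp fun _ hn => h.trans hn

lemma wb_le_right {S : Type*} [PartialOrder S] {a b c : S} (hw : WayBelow a b) (h : b ≤ c) :
    WayBelow a c := fun f hf z hz hc => hw f hf z hz (h.trans hc)

lemma wb_le {S : Type*} [PartialOrder S] {a b : S} (h : WayBelow a b) : a ≤ b := by
  obtain ⟨n, hn⟩ := h (fun _ => b) monotone_const b (by simpa [Set.range_const] using isLUB_singleton) le_rfl
  exact hn

lemma wb_zero {S : Type*} [AddCommMonoid S] [PartialOrder S] [CuSemigroup S] (y : S) :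
    WayBelow (0 : S) y := fun f _ _ _ _ => ⟨0, CuSemigroup.zero_le _⟩

lemma cu_add_le_add {S : Type*} [AddCommMonoid S] [PartialOrder S] [CuSemigroup S]
    {a b c d : S} (h1 : a ≤ b) (h2 : c ≤ d) : a + c ≤ b + d := by
  calc a + c ≤ a + d := CuSemigroup.add_le_add_left _ _ h2 _
    _ = d + a := add_comm _ _
    _ ≤ d + b := CuSemigroup.add_le_add_left _ _ h1 _
    _ = b + d := add_comm _ _

lemma cu_smul_le {S : Type*} [AddCommMonoid S] [PartialOrder S] [CuSemigroup S]
    {a b : S} (h : a ≤ b) (m : ℕ) : m • a ≤ m • b := by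
  induction m with
  | zero => simp
  | succ k ih => rw [succ_nsmul, succ_nsmul]; exact cu_add_le_add ih h

lemma cu_sum_le {S : Type*} [AddCommMonoid S] [PartialOrder S] [CuSemigroup S] {κ : Type*}
    (s : Finset κ) (a b : κ → S) (h : ∀ j ∈ s, a j ≤ b j) :
    ∑ j ∈ s, a j ≤ ∑ j ∈ s, b j := by
  induction s using Finset.cons_induction with
  | empty => simp
  | cons j s hj ih =>
    rw [Finset.sum_cons, Finset.sum_cons]
    exact cu_add_le_add (h j (Finset.mem_cons_self _ _))
      (ih fun j hjs => h j (Finset.mem_cons_of_mem hjs))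

lemma morph_smul {T S : Type*} [AddCommMonoid T] [PartialOrder T] [AddCommMonoid S]
    [PartialOrder S] {φ : T → S} (h : IsCuMorphism φ) (m : ℕ) (x : T) :
    φ (m • x) = m • φ x := by
  induction m with
  | zero => simpa using h.1
  | succ k ih => rw [succ_nsmul, succ_nsmul, h.2.1, ih]

lemma morph_sum {T S : Type*} [AddCommMonoid T] [PartialOrder T] [AddCommMonoid S]
    [PartialOrder S] {φ : T → S} (h : IsCuMorphism φ) {κ : Type*} (s : Finset κ) (f : κ → T) :
    φ (∑ j ∈ s, f j) = ∑ j ∈ s, φ (f j) := by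
  induction s using Finset.cons_induction with
  | empty => simpa using h.1
  | cons j s hj ih => rw [Finset.sum_cons, Finset.sum_cons, h.2.1, ih]

lemma directed_fin {ι : Type*} [Preorder ι] [Nonempty ι]
    (hdir : ∀ a b : ι, ∃ c, a ≤ c ∧ b ≤ c) (p : ℕ) (f : Fin p → ι) :
    ∃ c, ∀ j, f j ≤ c := by
  induction p with
  | zero => exact ⟨Classical.arbitrary ι, fun j => j.elim0⟩
  | succ k ih =>
    obtain ⟨c, hc⟩ := ih (f ∘ Fin.castSucc)
    obtain ⟨d, hd1, hd2⟩ := hdir c (f (Fin.last k))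
    exact ⟨d, Fin.lastCases (motive := fun j => f j ≤ d) hd2 fun j => (hc j).trans hd1⟩

end Helpers

theorem inductiveLimit_approximates {S : Type*} [AddCommMonoid S] [PartialOrder S]
    [CuSemigroup S] {ι : Type*} [Preorder ι] [Nonempty ι]
    (hdir : ∀ a b : ι, ∃ c, a ≤ c ∧ b ≤ c)
    (Sl : ι → Type*) [∀ i, AddCommMonoid (Sl i)] [∀ i, PartialOrder (Sl i)]
    [∀ i, CuSemigroup (Sl i)]
    (φc : ∀ a b : ι, a ≤ b → Sl a → Sl b)
    (hφc : ∀ a b (h : a ≤ b), IsCuMorphism (φc a b h))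
    (hcomp : ∀ a b c (hab : a ≤ b) (hbc : b ≤ c) (x : Sl a),
      φc b c hbc (φc a b hab x) = φc a c (hab.trans hbc) x)
    (φ : ∀ i, Sl i → S) (hφ : ∀ i, IsCuMorphism (φ i))
    (hL0 : ∀ a b (h : a ≤ b) (x : Sl a), φ b (φc a b h x) = φ a x)
    (hL1 : ∀ a b (xa : Sl a) (xb : Sl b), WayBelow (φ a xa) (φ b xb) →
      ∃ c, ∃ ha : a ≤ c, ∃ hb : b ≤ c, WayBelow (φc a c ha xa) (φc b c hb xb))
    (hL2 : ∀ x' x : S, WayBelow x' x → ∃ a, ∃ xa : Sl a,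
      WayBelow x' (φ a xa) ∧ WayBelow (φ a xa) x) :
    Approximates Sl φ := by
  intro p q x' x m n hx hk
  choose a z hz1 hz2 using fun j => hL2 (x' j) (x j) (hx j)
  obtain ⟨i0, hi0⟩ := directed_fin hdir p a
  set y0 : Fin p → Sl i0 := fun j => φc (a j) i0 (hi0 j) (z j) with hy0def
  have hy0 : ∀ j, φ i0 (y0 j) = φ (a j) (z j) := fun j => hL0 _ _ _ _
  have hkk : ∀ k, WayBelow (φ i0 (∑ j, m k j • y0 j)) (φ i0 (∑ j, n k j • y0 j)) := by
    intro k
    rw [morph_sum (hφ i0), morph_sum (hφ i0)]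
    simp only [morph_smul (hφ i0), hy0]
    refine wb_le_left (cu_sum_le _ _ _ fun j _ => cu_smul_le (wb_le (hz2 j)) (m k j))
      (wb_le_right (hk k) (cu_sum_le _ _ _ fun j _ => cu_smul_le (wb_le (hz1 j)) (n k j)))
  choose c hca hcb hcw using fun k =>
    hL1 i0 i0 (∑ j, m k j • y0 j) (∑ j, n k j • y0 j) (hkk k)
  obtain ⟨e, he⟩ := directed_fin hdir q c
  obtain ⟨d, hd0, hde⟩ := hdir i0 e
  refine ⟨d, fun j => φc i0 d hd0 (y0 j), fun j => ?_, fun k => ?_⟩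
  · rw [hL0 i0 d hd0, hy0]
    exact ⟨hz1 j, hz2 j⟩
  · have hcd : c k ≤ d := (he k).trans hde
    have hw := ((hφc (c k) d hcd).2.2.2.2) _ _ (hcw k)
    rw [hcomp, hcomp] at hw
    have e1 : φc i0 d hd0 (∑ j, m k j • y0 j) = ∑ j, m k j • φc i0 d hd0 (y0 j) := by
      rw [morph_sum (hφc i0 d hd0)]
      exact Finset.sum_congr rfl fun j _ => morph_smul (hφc i0 d hd0) _ _
    have e2 : φc i0 d hd0 (∑ j, n k j • y0 j) = ∑ j, n k j • φc i0 d hd0 (y0 j) := by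
      rw [morph_sum (hφc i0 d hd0)]
      exact Finset.sum_congr rfl fun j _ => morph_smul (hφc i0 d hd0) _ _
    rw [← e1, ← e2]
    exact hw
end
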